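/- Sharpness of Theorem 3.1: Let 1 ≤ a < b ≤ ∞, ν, ζ ∈ Ψ(a,b), ψ = ν/ζ, and A invertible. If f is a nonzero function whose natural function equals ψ, i.e. ‖f‖_{L^p} = ψ(p) for all p ∈ (a,b), then ‖f∘A‖_{Gν} = φ(Gζ, |det A|^{-1}) · ‖f‖_{Gψ}, where ‖f‖_{Gψ} = 1. -/

import Mathlib

/-! The dilation `f ↦ f ∘ A` multiplies each `L^p` norm by `|det A|^{-1/p}`, so
`‖f∘A‖_p/ν(p) = |det A|^{-1/p}/ζ(p) · ‖f‖_p/ψ(p)`. When `‖f‖_p = ψ(p)` the last factor is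
identically `1`, hence the supremum over `p` of the product is exactly `φ(Gζ, |det A|⁻¹)`
and no loss occurs in the inequality of Theorem 3.1. -/

open MeasureTheory ENNReal

/-- The Grand Lebesgue norm `‖f‖_{Gψ} = sup_{p ∈ (a,b)} ‖f‖_{L^p}/ψ(p)`. -/
noncomputable def gnorm (a b : ℝ≥0∞) (ψ : ℝ≥0∞ → ℝ) {X : Type*} [MeasurableSpace X]
    (μ : Measure X) (f : X → ℝ) : ℝ≥0∞ :=
  ⨆ p ∈ Set.Ioo a b, eLpNorm f p μ / ENNReal.ofReal (ψ p)

open Matrix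

theorem eLpNorm_comp_linearMap {E ε : Type*} [NormedAddCommGroup E] [NormedSpace ℝ E]
    [MeasurableSpace E] [BorelSpace E] [FiniteDimensional ℝ E] [TopologicalSpace ε]
    [ContinuousENorm ε] (μ : Measure E) [μ.IsAddHaarMeasure] {L : E →ₗ[ℝ] E}
    (hL : LinearMap.det L ≠ 0) (g : E → ε) (p : ℝ≥0∞) :
    eLpNorm (g ∘ L) p μ
      = (ENNReal.ofReal |LinearMap.det L|)⁻¹ ^ (1 / p.toReal) * eLpNorm g p μ := by
  have hemb : MeasurableEmbedding L :=
    (L.toContinuousLinearMap.toContinuousLinearEquivOfDetNeZero hL).toHomeomorph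
      |>.measurableEmbedding
  have hc : ENNReal.ofReal |(LinearMap.det L)⁻¹| ≠ 0 := by positivity
  rw [← hemb.eLpNorm_map_measure, Measure.map_linearMap_addHaar_eq_smul_addHaar μ hL,
    eLpNorm_smul_measure_of_ne_zero hc, abs_inv, ofReal_inv_of_pos (abs_pos.2 hL), smul_eq_mul,
    one_div, one_div, toReal_inv]

theorem eLpNorm_comp_mulVec {d : ℕ} {ε : Type*} [TopologicalSpace ε] [ContinuousENorm ε]
    {A : Matrix (Fin d) (Fin d) ℝ} (hA : A.det ≠ 0) (g : (Fin d → ℝ) → ε) (p : ℝ≥0∞) :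
    eLpNorm (fun x => g (A *ᵥ x)) p volume
      = (ENNReal.ofReal |A.det|)⁻¹ ^ (1 / p.toReal) * eLpNorm g p volume := by
  have hL : LinearMap.det (toLin' A) ≠ 0 := by rwa [LinearMap.det_toLin']
  simpa [LinearMap.det_toLin', Function.comp_def] using eLpNorm_comp_linearMap volume hL g p

theorem gnorm_eq_one_of_eLpNorm_eq {X : Type*} [MeasurableSpace X] {μ : Measure X}
    {a b : ℝ≥0∞} (hab : a < b) {ψ : ℝ≥0∞ → ℝ} (hψ : ∀ p ∈ Set.Ioo a b, 0 < ψ p) {f : X → ℝ}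
    (hf : ∀ p ∈ Set.Ioo a b, eLpNorm f p μ = ENNReal.ofReal (ψ p)) :
    gnorm a b ψ μ f = 1 := by
  calc gnorm a b ψ μ f = ⨆ p ∈ Set.Ioo a b, (1 : ℝ≥0∞) := by
        refine biSup_congr fun p hp => ?_
        rw [hf p hp, ENNReal.div_self (ofReal_pos.2 (hψ p hp)).ne' ofReal_ne_top]
    _ = 1 := biSup_const (Set.nonempty_Ioo.2 hab)

theorem ENNReal.mul_ofReal_div_div_ofReal {s t : ℝ} (hs : 0 < s) (ht : 0 < t) (x : ℝ≥0∞) :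
    x * ENNReal.ofReal (s / t) / ENNReal.ofReal s = x / ENNReal.ofReal t := by
  have hs0 : ENNReal.ofReal s ≠ 0 := (ofReal_pos.2 hs).ne'
  rw [ofReal_div_of_pos ht, mul_div_assoc, div_eq_mul_inv, div_eq_mul_inv, div_eq_mul_inv,
    mul_right_comm _ (ENNReal.ofReal t)⁻¹, ENNReal.mul_inv_cancel hs0 ofReal_ne_top, one_mul]

theorem gnorm_dilation_sharp_general {d : ℕ} (a b : ℝ≥0∞) (hab : a < b)
    (ν ζ : ℝ≥0∞ → ℝ)
    (hν : ∃ c > 0, ∀ p ∈ Set.Ioo a b, c ≤ ν p)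
    (hζ : ∃ c > 0, ∀ p ∈ Set.Ioo a b, c ≤ ζ p)
    (A : Matrix (Fin d) (Fin d) ℝ) (hA : A.det ≠ 0)
    (f : (Fin d → ℝ) → ℝ)
    (hnat : ∀ p ∈ Set.Ioo a b, eLpNorm f p volume = ENNReal.ofReal (ν p / ζ p)) :
    gnorm a b ν volume (fun x => f (A.mulVec x))
      = (⨆ p ∈ Set.Ioo a b,
          (ENNReal.ofReal |A.det|)⁻¹ ^ (1 / p.toReal) / ENNReal.ofReal (ζ p))
        * gnorm a b (fun p => ν p / ζ p) volume f ∧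
      gnorm a b (fun p => ν p / ζ p) volume f = 1 := by
  obtain ⟨c, hc, hcν⟩ := hν
  obtain ⟨c', hc', hcζ⟩ := hζ
  have hνpos : ∀ p ∈ Set.Ioo a b, 0 < ν p := fun p hp => hc.trans_le (hcν p hp)
  have hζpos : ∀ p ∈ Set.Ioo a b, 0 < ζ p := fun p hp => hc'.trans_le (hcζ p hp)
  have hone : gnorm a b (fun p => ν p / ζ p) volume f = 1 :=
    gnorm_eq_one_of_eLpNorm_eq hab (fun p hp => div_pos (hνpos p hp) (hζpos p hp)) hnat
  refine ⟨?_, hone⟩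
  rw [hone, mul_one, gnorm]
  refine biSup_congr fun p hp => ?_
  rw [eLpNorm_comp_mulVec hA, hnat p hp,
    ENNReal.mul_ofReal_div_div_ofReal (hνpos p hp) (hζpos p hp)]

/-- **sharpness of Theorem 3.1.** If `f` is a nonzero function whose
natural function is `ψ = ν/ζ`, i.e. `‖f‖_{L^p} = ψ(p)` for all `p ∈ (a,b)`, then
`‖f∘A‖_{Gν} = φ(Gζ, |det A|⁻¹) ‖f‖_{Gψ}` and `‖f‖_{Gψ} = 1`. -/
theorem gnorm_dilation_sharp {d : ℕ} (a b : ℝ≥0∞) (ha : 1 ≤ a) (hab : a < b)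
    (ν ζ : ℝ≥0∞ → ℝ)
    (hνc : ContinuousOn ν (Set.Ioo a b)) (hν : ∃ c > 0, ∀ p ∈ Set.Ioo a b, c ≤ ν p)
    (hζc : ContinuousOn ζ (Set.Ioo a b)) (hζ : ∃ c > 0, ∀ p ∈ Set.Ioo a b, c ≤ ζ p)
    (A : Matrix (Fin d) (Fin d) ℝ) (hA : A.det ≠ 0)
    (f : (Fin d → ℝ) → ℝ) (hf : AEStronglyMeasurable f volume)
    (hf0 : ¬ f =ᵐ[volume] 0)
    (hnat : ∀ p ∈ Set.Ioo a b, eLpNorm f p volume = ENNReal.ofReal (ν p / ζ p)) :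
    gnorm a b ν volume (fun x => f (A.mulVec x))
      = (⨆ p ∈ Set.Ioo a b,
          (ENNReal.ofReal |A.det|)⁻¹ ^ (1 / p.toReal) / ENNReal.ofReal (ζ p))
        * gnorm a b (fun p => ν p / ζ p) volume f ∧
      gnorm a b (fun p => ν p / ζ p) volume f = 1 :=
  gnorm_dilation_sharp_general a b hab ν ζ hν hζ A hA f hnat
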